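/- arXiv:2103.05381 — 2 statements merged into one kernel-verified Lean document; each statement's English description precedes it below -/
import Mathlib

section
/- If ρ_AB = ρ_A ⊗ ρ_B and ρ_CD = ρ_C ⊗ ρ_D are Kronecker products of density matrices ρ_A on ℂ^m, ρ_B on ℂ^n, ρ_C on ℂ^u, ρ_D on ℂ^v, then N_H^b(ρ_AB⊗ρ_CD) = 0. -/
open scoped Matrix Kronecker BigOperators ComplexOrder
open Matrix

/-- The positive-semidefinite square root of a PSD matrix (0 if not PSD). -/
noncomputable def psdSqrt {N : Type*} [Fintype N] [DecidableEq N] (A : Matrix N N ℂ) :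
    Matrix N N ℂ :=
  open scoped Classical in
  if h : A.PosSemidef then
    (h.1.eigenvectorUnitary : Matrix N N ℂ) * diagonal ((↑) ∘ (√·) ∘ h.1.eigenvalues) *
      (star h.1.eigenvectorUnitary : Matrix N N ℂ) else 0

/-- Squared Frobenius (Hilbert–Schmidt) norm: `‖X‖² = tr (Xᴴ X)`. -/
noncomputable def hsNormSq {N : Type*} [Fintype N] (X : Matrix N N ℂ) : ℝ :=
  (Matrix.trace (Xᴴ * X)).re

/-- A density matrix: positive semidefinite with unit trace. -/
def IsDensity {N : Type*} [Fintype N] [DecidableEq N] (ρ : Matrix N N ℂ) : Prop :=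
  ρ.PosSemidef ∧ ρ.trace = 1

/-- Standard inner product on `ℂ^N`. -/
noncomputable def cInner {N : Type*} [Fintype N] (x y : N → ℂ) : ℂ :=
  ∑ i, star (x i) * y i

/-- Outer product `ψ ψ†`. -/
noncomputable def outer {N : Type*} (ψ : N → ℂ) : Matrix N N ℂ :=
  Matrix.vecMulVec ψ (star ψ)

/-- The family of unit vectors of a rank-one von Neumann measurement: an orthonormal basis,
indexed by the dimension. -/
def IsVNM {N : Type*} [Fintype N] [DecidableEq N] (u : N → N → ℂ) : Prop :=
  ∀ a b, cInner (u a) (u b) = if a = b then (1 : ℂ) else 0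

/-- The rank-one projection `Π_h = u_h u_h†` of a measurement. -/
noncomputable def projOf {N : Type*} (u : N → N → ℂ) (h : N) : Matrix N N ℂ :=
  outer (u h)

/-- The measurement `{u_h u_h†}` fixes `σ`: `Σ_h Π_h σ Π_h = σ`. -/
def FixesVNM {N : Type*} [Fintype N] (u : N → N → ℂ) (σ : Matrix N N ℂ) : Prop :=
  ∑ h, projOf u h * σ * projOf u h = σ

/-- Reduced state of the second factor: `(ρ_B)_{j j'} = Σ_i ρ_{(i,j),(i,j')}`. -/
noncomputable def redB {m n : ℕ} (ρ : Matrix (Fin m × Fin n) (Fin m × Fin n) ℂ) :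
    Matrix (Fin n) (Fin n) ℂ :=
  Matrix.of fun j j' => ∑ i, ρ (i, j) (i, j')

/-- Reduced state of the first factor: `(ρ_C)_{k k'} = Σ_l ρ_{(k,l),(k',l)}`. -/
noncomputable def redC {u v : ℕ} (ρ : Matrix (Fin u × Fin v) (Fin u × Fin v) ℂ) :
    Matrix (Fin u) (Fin u) ℂ :=
  Matrix.of fun k k' => ∑ l, ρ (k, l) (k', l)

/-- `I_m ⊗ P ⊗ I_v` acting on the middle two factors. -/
noncomputable def ampMid (m v : ℕ) {n u : ℕ} (P : Matrix (Fin n × Fin u) (Fin n × Fin u) ℂ) :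
    Matrix ((Fin m × Fin n) × Fin u × Fin v) ((Fin m × Fin n) × Fin u × Fin v) ℂ :=
  Matrix.of fun p q =>
    (if p.1.1 = q.1.1 then (1 : ℂ) else 0) * P (p.1.2, p.2.1) (q.1.2, q.2.1) *
      (if p.2.2 = q.2.2 then (1 : ℂ) else 0)

/-- The map `Π^{BC}(X) = Σ_h (I_m ⊗ Π_h ⊗ I_v) X (I_m ⊗ Π_h ⊗ I_v)`. -/
noncomputable def pinchBC {m n u v : ℕ} (w : (Fin n × Fin u) → (Fin n × Fin u) → ℂ)
    (X : Matrix ((Fin m × Fin n) × Fin u × Fin v) ((Fin m × Fin n) × Fin u × Fin v) ℂ) :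
    Matrix ((Fin m × Fin n) × Fin u × Fin v) ((Fin m × Fin n) × Fin u × Fin v) ℂ :=
  ∑ h, ampMid m v (projOf w h) * X * ampMid m v (projOf w h)

/-- The measurement-induced nonbilocality `N_H^b(ρ_AB ⊗ ρ_CD)`. -/
noncomputable def NHb {m n u v : ℕ}
    (ρAB : Matrix (Fin m × Fin n) (Fin m × Fin n) ℂ)
    (ρCD : Matrix (Fin u × Fin v) (Fin u × Fin v) ℂ) : ℝ :=
  sSup { r : ℝ | ∃ w : (Fin n × Fin u) → (Fin n × Fin u) → ℂ,
    IsVNM w ∧ FixesVNM w (redB ρAB ⊗ₖ redC ρCD) ∧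
    r = hsNormSq (psdSqrt (ρAB ⊗ₖ ρCD) - pinchBC w (psdSqrt (ρAB ⊗ₖ ρCD))) }

/-!
A measurement that fixes a positive semidefinite `σ` consists of projections commuting with `σ`,
hence with `√σ`, so it also fixes `√σ`. For product inputs the square root of the global state is
`√ρ_A ⊗ √(ρ_B ⊗ ρ_C) ⊗ √ρ_D`, and the reduced state on `BC` is `ρ_B ⊗ ρ_C`; every admissible
measurement therefore leaves `√(ρ_AB ⊗ ρ_CD)` unchanged and every candidate value of the
supremum is `0`.
-/

section Measurement

variable {N : Type*} [Fintype N] [DecidableEq N] {w : N → N → ℂ}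

theorem IsVNM.projOf_mul_projOf (hw : IsVNM w) (g h : N) :
    projOf w g * projOf w h = if g = h then projOf w g else 0 := by
  have hgh : star (w g) ⬝ᵥ w h = if g = h then 1 else 0 := hw g h
  rw [projOf, projOf, outer, outer, vecMulVec_mul_vecMulVec, hgh]
  split_ifs with hg
  · subst hg; simp
  · simp

theorem IsVNM.sum_projOf (hw : IsVNM w) : ∑ h, projOf w h = 1 := by
  let V : Matrix N N ℂ := of fun i h => w h i
  have hVV : Vᴴ * V = 1 := by
    ext a b
    simpa [V, mul_apply, conjTranspose_apply, cInner, one_apply] using hw a b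
  ext i j
  simpa [V, mul_apply, conjTranspose_apply, projOf, outer, vecMulVec_apply, Matrix.sum_apply,
    one_apply] using congrArg (· i j) (mul_eq_one_comm.mp hVV)

theorem IsVNM.fixesVNM_iff_forall_commute (hw : IsVNM w) {S : Matrix N N ℂ} :
    FixesVNM w S ↔ ∀ h, Commute (projOf w h) S := by
  have conj_sum : ∀ g, projOf w g * (∑ h, projOf w h * S * projOf w h)
      = projOf w g * S * projOf w g := by
    intro g
    simp [Finset.mul_sum, ← mul_assoc, hw.projOf_mul_projOf]
  have sum_conj : ∀ g, (∑ h, projOf w h * S * projOf w h) * projOf w g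
      = projOf w g * S * projOf w g := by
    intro g
    simp [Finset.sum_mul, mul_assoc, hw.projOf_mul_projOf, eq_comm]
  constructor
  · intro hS g
    have left := conj_sum g
    have right := sum_conj g
    rw [hS] at left right
    exact left.trans right.symm
  · intro hc
    calc ∑ h, projOf w h * S * projOf w h = ∑ h, projOf w h * S := by
          refine Finset.sum_congr rfl fun h _ => ?_
          rw [mul_assoc, ← (hc h).eq, ← mul_assoc, hw.projOf_mul_projOf, if_pos rfl]
      _ = S := by rw [← Finset.sum_mul, hw.sum_projOf, one_mul]

end Measurement

section SquareRoot

variable {N : Type*} [Fintype N] [DecidableEq N]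

open scoped MatrixOrder

theorem psdSqrt_eq_cfcSqrt {A : Matrix N N ℂ} (hA : A.PosSemidef) :
    psdSqrt A = CFC.sqrt A := by
  rw [psdSqrt, dif_pos hA, CFC.sqrt_eq_cfc, cfc_nnreal_eq_real _ A hA.nonneg, hA.1.cfc_eq]
  have hsqrt : (fun x : ℝ => ((NNReal.sqrt x.toNNReal : NNReal) : ℝ)) = fun x => √x := by
    funext x
    rw [Real.sqrt]
  rw [hsqrt]
  rfl

theorem psdSqrt_kronecker {I J : Type*} [Fintype I] [Fintype J] [DecidableEq I] [DecidableEq J]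
    {A : Matrix I I ℂ} {B : Matrix J J ℂ} (hA : A.PosSemidef) (hB : B.PosSemidef) :
    psdSqrt (A ⊗ₖ B) = psdSqrt A ⊗ₖ psdSqrt B := by
  rw [psdSqrt_eq_cfcSqrt (hA.kronecker hB), psdSqrt_eq_cfcSqrt hA, psdSqrt_eq_cfcSqrt hB]
  refine CFC.sqrt_unique ?_ ((CFC.sqrt_nonneg A).posSemidef.kronecker
    (CFC.sqrt_nonneg B).posSemidef).nonneg
  rw [← mul_kronecker_mul, CFC.sqrt_mul_sqrt_self A hA.nonneg,
    CFC.sqrt_mul_sqrt_self B hB.nonneg]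

theorem FixesVNM.psdSqrt {w : N → N → ℂ} (hw : IsVNM w) {S : Matrix N N ℂ}
    (hS : S.PosSemidef) (hfix : FixesVNM w S) : FixesVNM w (psdSqrt S) := by
  rw [hw.fixesVNM_iff_forall_commute] at hfix ⊢
  intro h
  rw [psdSqrt_eq_cfcSqrt hS, CFC.sqrt_eq_cfc]
  exact ((hfix h).symm.cfc_nnreal _).symm

end SquareRoot

section Tripartite

variable {m n u v : ℕ}

theorem redB_kronecker {ρA : Matrix (Fin m) (Fin m) ℂ} (hA : ρA.trace = 1)
    (ρB : Matrix (Fin n) (Fin n) ℂ) : redB (ρA ⊗ₖ ρB) = ρB := by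
  ext j j'
  simp only [redB, of_apply, kroneckerMap_apply, ← Finset.sum_mul]
  rw [show ∑ i, ρA i i = 1 from hA, one_mul]

theorem redC_kronecker (ρC : Matrix (Fin u) (Fin u) ℂ) {ρD : Matrix (Fin v) (Fin v) ℂ}
    (hD : ρD.trace = 1) : redC (ρC ⊗ₖ ρD) = ρC := by
  ext k k'
  simp only [redC, of_apply, kroneckerMap_apply, ← Finset.mul_sum]
  rw [show ∑ l, ρD l l = 1 from hD, mul_one]

def midKronecker (A : Matrix (Fin m) (Fin m) ℂ) (X : Matrix (Fin n × Fin u) (Fin n × Fin u) ℂ)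
    (D : Matrix (Fin v) (Fin v) ℂ) :
    Matrix ((Fin m × Fin n) × Fin u × Fin v) ((Fin m × Fin n) × Fin u × Fin v) ℂ :=
  of fun p q => A p.1.1 q.1.1 * X (p.1.2, p.2.1) (q.1.2, q.2.1) * D p.2.2 q.2.2

theorem kronecker_kronecker_eq_midKronecker (A : Matrix (Fin m) (Fin m) ℂ)
    (B : Matrix (Fin n) (Fin n) ℂ) (C : Matrix (Fin u) (Fin u) ℂ) (D : Matrix (Fin v) (Fin v) ℂ) :
    (A ⊗ₖ B) ⊗ₖ (C ⊗ₖ D) = midKronecker A (B ⊗ₖ C) D := by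
  ext ⟨⟨i, j⟩, k, l⟩ ⟨⟨i', j'⟩, k', l'⟩
  simp only [midKronecker, kroneckerMap_apply, of_apply]
  ring

theorem ampMid_mul_midKronecker_mul_ampMid (A : Matrix (Fin m) (Fin m) ℂ)
    (P X Q : Matrix (Fin n × Fin u) (Fin n × Fin u) ℂ) (D : Matrix (Fin v) (Fin v) ℂ) :
    ampMid m v P * midKronecker A X D * ampMid m v Q = midKronecker A (P * X * Q) D := by
  ext ⟨⟨i, j⟩, k, l⟩ ⟨⟨i', j'⟩, k', l'⟩
  simp only [midKronecker, ampMid, mul_apply, of_apply, Fintype.sum_prod_type,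
    ite_mul, mul_ite, one_mul, mul_one, zero_mul, mul_zero, Finset.sum_ite_irrel,
    Finset.sum_const_zero, Finset.sum_ite_eq, Finset.sum_ite_eq', Finset.mem_univ, if_true,
    Finset.sum_mul, Finset.mul_sum]
  refine Finset.sum_congr rfl fun _ _ => Finset.sum_congr rfl fun _ _ =>
    Finset.sum_congr rfl fun _ _ => Finset.sum_congr rfl fun _ _ => by ring

theorem pinchBC_midKronecker (w : Fin n × Fin u → Fin n × Fin u → ℂ)
    (A : Matrix (Fin m) (Fin m) ℂ) (X : Matrix (Fin n × Fin u) (Fin n × Fin u) ℂ)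
    (D : Matrix (Fin v) (Fin v) ℂ) :
    pinchBC w (midKronecker A X D) = midKronecker A (∑ h, projOf w h * X * projOf w h) D := by
  simp only [pinchBC, ampMid_mul_midKronecker_mul_ampMid]
  ext p q
  simp [midKronecker, Matrix.sum_apply, Finset.sum_mul, Finset.mul_sum]

theorem NHb_eq_zero_of_forall_pinchBC_eq {ρAB : Matrix (Fin m × Fin n) (Fin m × Fin n) ℂ}
    {ρCD : Matrix (Fin u × Fin v) (Fin u × Fin v) ℂ}
    (h : ∀ w, IsVNM w → FixesVNM w (redB ρAB ⊗ₖ redC ρCD) →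
      pinchBC w (psdSqrt (ρAB ⊗ₖ ρCD)) = psdSqrt (ρAB ⊗ₖ ρCD)) :
    NHb ρAB ρCD = 0 := by
  have hsub : {r : ℝ | ∃ w, IsVNM w ∧ FixesVNM w (redB ρAB ⊗ₖ redC ρCD) ∧
      r = hsNormSq (psdSqrt (ρAB ⊗ₖ ρCD) - pinchBC w (psdSqrt (ρAB ⊗ₖ ρCD)))} ⊆ {0} := by
    rintro r ⟨w, hw, hfix, rfl⟩
    simp [h w hw hfix, hsNormSq]
  rcases Set.subset_singleton_iff_eq.mp hsub with hs | hs
  · rw [NHb, hs, Real.sSup_empty]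
  · rw [NHb, hs, csSup_singleton]

end Tripartite

/-- For product inputs `ρ_AB = ρ_A ⊗ ρ_B`, `ρ_CD = ρ_C ⊗ ρ_D`,
the nonbilocality vanishes. -/
theorem stmt5 {m n u v : ℕ}
    (ρA : Matrix (Fin m) (Fin m) ℂ) (ρB : Matrix (Fin n) (Fin n) ℂ)
    (ρC : Matrix (Fin u) (Fin u) ℂ) (ρD : Matrix (Fin v) (Fin v) ℂ)
    (hA : IsDensity ρA) (hB : IsDensity ρB) (hC : IsDensity ρC) (hD : IsDensity ρD) :
    NHb (ρA ⊗ₖ ρB) (ρC ⊗ₖ ρD) = 0 := by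
  have hsqrt : psdSqrt ((ρA ⊗ₖ ρB) ⊗ₖ (ρC ⊗ₖ ρD))
      = midKronecker (psdSqrt ρA) (psdSqrt (ρB ⊗ₖ ρC)) (psdSqrt ρD) := by
    rw [psdSqrt_kronecker (hA.1.kronecker hB.1) (hC.1.kronecker hD.1),
      psdSqrt_kronecker hA.1 hB.1, psdSqrt_kronecker hC.1 hD.1, psdSqrt_kronecker hB.1 hC.1,
      kronecker_kronecker_eq_midKronecker]
  refine NHb_eq_zero_of_forall_pinchBC_eq fun w hw hfix => ?_
  rw [redB_kronecker hA.2, redC_kronecker _ hD.2] at hfix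
  rw [hsqrt, pinchBC_midKronecker, hfix.psdSqrt hw (hB.1.kronecker hC.1)]
end

section
/- Let σ be a positive-semidefinite N×N complex matrix whose N eigenvalues are pairwise distinct, and let (v_s)_{s∈Fin N} be an orthonormal eigenbasis of σ. If a rank-one von Neumann measurement {Π_h = u_h u_h†}_{h∈Fin N} fixes σ, i.e. Σ_h Π_h σ Π_h = σ, then there is a permutation π of Fin N such that u_h u_h† = v_{π(h)} v_{π(h)}† for every h; in particular the measurement projections are exactly the spectral projections of σ. -/
open scoped Matrix Kronecker BigOperators ComplexOrder
open Matrix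

/-! Averaging `σ` over the measurement sends `u_k` to `⟨u_k, σ u_k⟩ u_k`, so every `u_k` is an
eigenvector of `σ`. Expanding `u_k` in the eigenbasis `v`, only components along eigenvectors with
the same eigenvalue survive; since the eigenvalues are distinct, `u_k` is a unimodular multiple of
a single `v_s`. Orthogonality of the `u_k` makes `k ↦ s` injective, hence a permutation. -/

open Matrix

section VonNeumann

variable {n : Type*} [Fintype n]

lemma cInner_eq_star_dotProduct (x y : n → ℂ) : cInner x y = star x ⬝ᵥ y := rfl

lemma cInner_smul_smul (a b : ℂ) (x y : n → ℂ) :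
    cInner (a • x) (b • y) = star a * b * cInner x y := by
  simp only [cInner_eq_star_dotProduct, star_smul, smul_dotProduct, dotProduct_smul, smul_eq_mul]
  ring

lemma outer_mulVec (ψ x : n → ℂ) : outer ψ *ᵥ x = cInner ψ x • ψ := by
  ext i
  simp [outer, vecMulVec_mulVec, cInner_eq_star_dotProduct, mul_comm]

lemma outer_smul (c : ℂ) (ψ : n → ℂ) : outer (c • ψ) = (c * star c) • outer ψ := by
  ext i j
  simp only [outer, vecMulVec_apply, star_smul, Pi.smul_apply, smul_eq_mul, Matrix.smul_apply]
  ring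

lemma cInner_mulVec_of_isHermitian {σ : Matrix n n ℂ} (hσ : σ.IsHermitian) {w : n → ℂ} {d : ℝ}
    (hw : σ *ᵥ w = (d : ℂ) • w) (x : n → ℂ) : cInner w (σ *ᵥ x) = d * cInner w x := by
  rw [cInner_eq_star_dotProduct, dotProduct_mulVec, ← hσ.eq, ← star_mulVec, hw, star_smul,
    smul_dotProduct, Complex.star_def, Complex.conj_ofReal, smul_eq_mul, cInner_eq_star_dotProduct]

variable [DecidableEq n] {v u : n → n → ℂ}

lemma IsVNM.cInner_self (hv : IsVNM v) (s : n) : cInner (v s) (v s) = 1 := by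
  simpa using hv s s

lemma IsVNM.ne_zero (hv : IsVNM v) (s : n) : v s ≠ 0 := by
  intro h
  simpa [h, cInner] using hv.cInner_self s

lemma IsVNM.sum_cInner_smul (hv : IsVNM v) (x : n → ℂ) : ∑ s, cInner (v s) x • v s = x := by
  set V : Matrix n n ℂ := of fun i s => v s i
  have hVV : Vᴴ * V = 1 := by
    ext s t
    simpa [V, mul_apply, one_apply, cInner] using hv s t
  have hsum : ∑ s, outer (v s) = V * Vᴴ := by
    ext i j
    simp [V, Matrix.sum_apply, outer, mul_apply, vecMulVec_apply]
  simp only [← outer_mulVec, ← sum_mulVec, hsum, mul_eq_one_comm.mp hVV, one_mulVec]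

lemma IsVNM.exists_cInner_ne_zero (hv : IsVNM v) {x : n → ℂ} (hx : x ≠ 0) :
    ∃ s, cInner (v s) x ≠ 0 := by
  by_contra! h
  exact hx (by simpa [h] using (hv.sum_cInner_smul x).symm)

lemma FixesVNM.mulVec_eq_smul {σ : Matrix n n ℂ} (hu : IsVNM u) (hfix : FixesVNM u σ) (k : n) :
    σ *ᵥ u k = cInner (u k) (σ *ᵥ u k) • u k := by
  conv_lhs => rw [← hfix]
  rw [sum_mulVec, Finset.sum_eq_single k]
  · simp only [projOf, ← mulVec_mulVec, outer_mulVec, hu.cInner_self, one_smul]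
  · intro h _ hhk
    simp [projOf, ← mulVec_mulVec, outer_mulVec, hu h k, hhk]
  · simp

lemma eq_cInner_smul_of_mulVec_eq_smul {σ : Matrix n n ℂ} (hσ : σ.IsHermitian)
    {d : n → ℝ} (hd : Function.Injective d) (hv : IsVNM v) (heig : ∀ s, σ *ᵥ v s = (d s : ℂ) • v s)
    {x : n → ℂ} {μ : ℂ} (hx : σ *ᵥ x = μ • x) {s : n} (hs : cInner (v s) x ≠ 0) :
    x = cInner (v s) x • v s := by
  have eigenvalue_eq : ∀ t, cInner (v t) x ≠ 0 → (d t : ℂ) = μ := fun t ht => by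
    have h := cInner_mulVec_of_isHermitian hσ (heig t) x
    rw [hx, ← one_smul ℂ (v t), cInner_smul_smul, one_smul, star_one, one_mul] at h
    exact (mul_right_cancel₀ ht h).symm
  conv_lhs => rw [← hv.sum_cInner_smul x]
  refine Finset.sum_eq_single s (fun t _ hts => ?_) (by simp)
  by_contra ht
  exact hts (hd (Complex.ofReal_injective
    ((eigenvalue_eq t (left_ne_zero_of_smul ht)).trans (eigenvalue_eq s hs).symm)))

lemma projOf_eq_of_eq_smul (hu : IsVNM u) (hv : IsVNM v) {k s : n} {c : ℂ}
    (h : u k = c • v s) : projOf u k = projOf v s := by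
  have hc : star c * c = 1 := by
    simpa [h, cInner_smul_smul, hv.cInner_self] using hu.cInner_self k
  rw [projOf, h, outer_smul, mul_comm, hc, one_smul, projOf]

end VonNeumann

/-- If σ is PSD with pairwise distinct eigenvalues and a rank-one von Neumann
measurement fixes σ, then its projections are exactly the spectral projections of σ, up to
a permutation. -/
theorem stmt7 {N : ℕ} (σ : Matrix (Fin N) (Fin N) ℂ) (hσ : σ.PosSemidef)
    (dvals : Fin N → ℝ) (hdist : Function.Injective dvals)
    (v : Fin N → Fin N → ℂ) (hv : IsVNM v)
    (heig : ∀ s, σ *ᵥ v s = (dvals s : ℂ) • v s)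
    (u : Fin N → Fin N → ℂ) (hu : IsVNM u) (hfix : FixesVNM u σ) :
    ∃ π : Equiv.Perm (Fin N), ∀ h, projOf u h = projOf v (π h) := by
  choose f hf using fun k => hv.exists_cInner_ne_zero (hu.ne_zero k)
  have hrep (k : Fin N) : u k = cInner (v (f k)) (u k) • v (f k) :=
    eq_cInner_smul_of_mulVec_eq_smul hσ.1 hdist hv heig (hfix.mulVec_eq_smul hu k) (hf k)
  have hinj : Function.Injective f := fun k k' hkk' => by
    by_contra hne
    have h := hu k k'
    rw [if_neg hne, hrep k, hrep k', hkk', cInner_smul_smul, hv.cInner_self, mul_one] at h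
    have hk := hf k
    rw [hkk'] at hk
    exact mul_ne_zero (star_ne_zero.mpr hk) (hf k') h
  exact ⟨Equiv.ofBijective f (Finite.injective_iff_bijective.mp hinj),
    fun k => projOf_eq_of_eq_smul hu hv (hrep k)⟩
end
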